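/- arXiv:1204.2921 — 8 statements merged into one kernel-verified Lean document; each statement's English description precedes it below -/
import Mathlib

section
/- Let f be differentiable on the interior of I with f' integrable on [a,b], a < b, and suppose |f'| is convex on I with |f'(x)| ≤ M on [a,b]. Then for each x ∈ [a,b]: |f(x) - (1/(b-a))∫ₐᵇ f(u) du| ≤ (M/(b-a))·(((x-a)² + (b-x)²)/2). (The Ostrowski inequality recovered from the h-convex case with h(t) = t.) -/
open MeasureTheory

lemma integral_abs_sub_eq (a b x : ℝ) (h1 : a ≤ x) (h2 : x ≤ b) :
    (∫ u in a..b, |x - u|) = ((x - a) ^ 2 + (b - x) ^ 2) / 2 := by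
  have hsplit : (∫ u in a..x, |x - u|) + (∫ u in x..b, |x - u|) = ∫ u in a..b, |x - u| := by
    apply intervalIntegral.integral_add_adjacent_intervals <;>
      exact (continuous_const.sub continuous_id).abs.intervalIntegrable _ _
  have h3 : (∫ u in a..x, |x - u|) = ∫ u in a..x, (x - u) := by
    apply intervalIntegral.integral_congr
    intro u hu
    simp only []
    rw [Set.uIcc_of_le h1] at hu
    exact abs_of_nonneg (by linarith [hu.2])
  have h4 : (∫ u in x..b, |x - u|) = ∫ u in x..b, (u - x) := by
    apply intervalIntegral.integral_congr
    intro u hu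
    simp only []
    rw [Set.uIcc_of_le h2] at hu
    rw [abs_of_nonpos (by linarith [hu.1])]; ring
  rw [← hsplit, h3, h4]
  rw [intervalIntegral.integral_sub intervalIntegrable_const (continuous_id'.intervalIntegrable _ _),
    intervalIntegral.integral_sub (continuous_id'.intervalIntegrable _ _) intervalIntegrable_const]
  rw [integral_id, integral_id]
  simp
  ring

theorem ostrowski_classical
    (f f' : ℝ → ℝ) (a b M : ℝ) (hab : a < b)
    (hderiv : ∀ y ∈ Set.Icc a b, HasDerivAt f (f' y) y)
    (hint : IntervalIntegrable f' volume a b)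
    (hconv : ConvexOn ℝ (Set.Icc a b) (fun y => |f' y|))
    (hM : ∀ y ∈ Set.Icc a b, |f' y| ≤ M)
    (x : ℝ) (hx : x ∈ Set.Icc a b) :
    |f x - (1 / (b - a)) * ∫ u in a..b, f u| ≤
      (M / (b - a)) * (((x - a) ^ 2 + (b - x) ^ 2) / 2) := by
  have hba : (0:ℝ) < b - a := by linarith
  have hfc : ContinuousOn f (Set.Icc a b) := fun y hy => (hderiv y hy).continuousAt.continuousWithinAt
  have hfint : IntervalIntegrable f volume a b := hfc.intervalIntegrable_of_Icc hab.le
  -- pointwise bound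
  have key : ∀ u ∈ Set.Icc a b, |f x - f u| ≤ M * |x - u| := by
    intro u hu
    have hsub : Set.uIcc u x ⊆ Set.Icc a b := Set.uIcc_subset_Icc hu hx
    have heq : f x - f u = ∫ t in u..x, f' t := by
      rw [intervalIntegral.integral_eq_sub_of_hasDerivAt
        (fun t ht => hderiv t (hsub ht))
        (hint.mono_set (Set.uIcc_of_le hab.le ▸ hsub))]
    rw [heq, ← Real.norm_eq_abs, ← Real.norm_eq_abs]
    have := intervalIntegral.norm_integral_le_of_norm_le_const
      (C := M) (f := f') (a := u) (b := x) ?_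
    · simpa [abs_sub_comm] using this
    · intro t ht
      exact (hM t (hsub (Set.uIoc_subset_uIcc ht))).trans_eq rfl
  have hrw : f x - (1 / (b - a)) * ∫ u in a..b, f u
      = (1 / (b - a)) * ∫ u in a..b, (f x - f u) := by
    rw [intervalIntegral.integral_sub intervalIntegrable_const hfint]
    simp
    field_simp
  rw [hrw, abs_mul, abs_of_nonneg (by positivity : (0:ℝ) ≤ 1 / (b - a))]
  have hint1 : IntervalIntegrable (fun u => |f x - f u|) volume a b :=
    (intervalIntegrable_const.sub hfint).norm
  have hint2 : IntervalIntegrable (fun u => M * |x - u|) volume a b :=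
    ((continuous_const.mul (continuous_const.sub continuous_id).abs)).intervalIntegrable _ _
  have h1 : |∫ u in a..b, (f x - f u)| ≤ ∫ u in a..b, |f x - f u| :=
    intervalIntegral.abs_integral_le_integral_abs hab.le
  have h2 : (∫ u in a..b, |f x - f u|) ≤ ∫ u in a..b, M * |x - u| :=
    intervalIntegral.integral_mono_on hab.le hint1 hint2 key
  have h3 : (∫ u in a..b, M * |x - u|) = M * (((x - a) ^ 2 + (b - x) ^ 2) / 2) := by
    rw [intervalIntegral.integral_const_mul, integral_abs_sub_eq a b x hx.1 hx.2]
  calc (1 / (b - a)) * |∫ u in a..b, (f x - f u)|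
      ≤ (1 / (b - a)) * (M * (((x - a) ^ 2 + (b - x) ^ 2) / 2)) := by
        apply mul_le_mul_of_nonneg_left _ (by positivity)
        rw [← h3]; exact h1.trans h2
    _ = (M / (b - a)) * (((x - a) ^ 2 + (b - x) ^ 2) / 2) := by ring
end

section
/- Let s ∈ (0,1]. Let f be differentiable on the interior of I with f' integrable on [a,b], a < b. If |f'| is s-convex in the second sense on I and |f'(x)| ≤ M on [a,b], then for each x ∈ [a,b]: |f(x) - (1/(b-a))∫ₐᵇ f(u) du| ≤ (M·((x-a)² + (b-x)²)/(b-a))·(1/(2s+1) + Γ(s+1)²/Γ(2s+2)). -/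
/-!
The mean value theorem makes `f` `M`-Lipschitz on `[a, b]`, and integrating
`|f u - f x| ≤ M |u - x|` gives the classical Ostrowski bound
`M ((x - a)² + (b - x)²) / (2 (b - a))`. For `s ∈ (0, 1]` the constant of the statement is at
least `1/2`: `1/(2s+1) ≥ 1/3`, and the Beta integral `∫₀¹ tˢ(1-t)ˢ dt` dominates
`∫₀¹ t(1-t) dt = 1/6`.
-/

open MeasureTheory Set

theorem Real.Gamma_mul_Gamma_eq_Gamma_add_mul_integral {p q : ℝ} (hp : 0 < p) (hq : 0 < q) :
    Real.Gamma p * Real.Gamma q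
      = Real.Gamma (p + q) * ∫ t in (0:ℝ)..1, t ^ (p - 1) * (1 - t) ^ (q - 1) := by
  have hbeta : Complex.betaIntegral p q
      = ((∫ t in (0:ℝ)..1, t ^ (p - 1) * (1 - t) ^ (q - 1) : ℝ) : ℂ) := by
    rw [Complex.betaIntegral, ← intervalIntegral.integral_ofReal]
    refine intervalIntegral.integral_congr fun t ht => ?_
    rw [uIcc_of_le zero_le_one] at ht
    rw [Complex.ofReal_mul, Complex.ofReal_cpow ht.1, Complex.ofReal_cpow (sub_nonneg.2 ht.2)]
    push_cast
    rfl
  have h := Complex.Gamma_mul_Gamma_eq_betaIntegral (s := p) (t := q) (by simpa) (by simpa)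
  rw [hbeta, ← Complex.ofReal_add, Complex.Gamma_ofReal, Complex.Gamma_ofReal,
    Complex.Gamma_ofReal] at h
  exact_mod_cast h

theorem integral_abs_sub_of_mem_Icc {a b x : ℝ} (hx : x ∈ Icc a b) :
    ∫ u in a..b, |u - x| = ((x - a) ^ 2 + (b - x) ^ 2) / 2 := by
  have hint : ∀ c d : ℝ, IntervalIntegrable (fun u => |u - x|) volume c d := fun c d =>
    (continuous_id.sub continuous_const).abs.intervalIntegrable c d
  have hpow := fun c => integral_pow_abs_sub_uIoc (a := x) (b := c) (n := 1)
  simp only [pow_one] at hpow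
  rw [← intervalIntegral.integral_add_adjacent_intervals (hint a x) (hint x b),
    intervalIntegral.integral_of_le hx.1, intervalIntegral.integral_of_le hx.2,
    ← uIoc_of_ge hx.1, ← uIoc_of_le hx.2, hpow, hpow,
    abs_of_nonpos (sub_nonpos.2 hx.1), abs_of_nonneg (sub_nonneg.2 hx.2)]
  ring

theorem Real.one_div_six_le_integral_rpow_mul_one_sub_rpow {s : ℝ} (hs0 : 0 ≤ s)
    (hs1 : s ≤ 1) :
    1 / 6 ≤ ∫ t in (0:ℝ)..1, t ^ s * (1 - t) ^ s := by
  have hpoly : ∫ t in (0:ℝ)..1, t * (1 - t) = 1 / 6 := by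
    simp only [mul_sub, mul_one, ← sq]
    rw [intervalIntegral.integral_sub intervalIntegral.intervalIntegrable_id
      ((continuous_pow 2).intervalIntegrable 0 1), integral_id, integral_pow]
    norm_num
  have hcont : Continuous fun t : ℝ => t ^ s * (1 - t) ^ s :=
    (continuous_id.rpow_const fun _ => Or.inr hs0).mul
      ((continuous_const.sub continuous_id).rpow_const fun _ => Or.inr hs0)
  rw [← hpoly]
  refine intervalIntegral.integral_mono_on zero_le_one
    ((continuous_id.mul (continuous_const.sub continuous_id)).intervalIntegrable 0 1)
    (hcont.intervalIntegrable 0 1) fun t ht => ?_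
  have ht' : 0 ≤ 1 - t := sub_nonneg.2 ht.2
  exact mul_le_mul (Real.self_le_rpow_of_le_one ht.1 ht.2 hs1)
    (Real.self_le_rpow_of_le_one ht' (by linarith [ht.1]) hs1) ht' (Real.rpow_nonneg ht.1 s)

theorem one_half_le_one_div_add_Gamma_sq_div_Gamma {s : ℝ} (hs : s ∈ Ioc (0:ℝ) 1) :
    1 / 2 ≤ 1 / (2 * s + 1) + Real.Gamma (s + 1) ^ 2 / Real.Gamma (2 * s + 2) := by
  obtain ⟨hs0, hs1⟩ := hs
  have hbeta : Real.Gamma (s + 1) ^ 2 / Real.Gamma (2 * s + 2)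
      = ∫ t in (0:ℝ)..1, t ^ s * (1 - t) ^ s := by
    have h := Real.Gamma_mul_Gamma_eq_Gamma_add_mul_integral (p := s + 1) (q := s + 1)
      (by linarith) (by linarith)
    rw [show s + 1 + (s + 1) = 2 * s + 2 by ring, add_sub_cancel_right, ← sq] at h
    rw [h, mul_div_cancel_left₀ _ (Real.Gamma_pos_of_pos (by linarith)).ne']
  have hthird : 1 / 3 ≤ 1 / (2 * s + 1) :=
    one_div_le_one_div_of_le (by positivity) (by linarith)
  linarith [hbeta ▸ Real.one_div_six_le_integral_rpow_mul_one_sub_rpow hs0.le hs1]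

theorem abs_sub_average_le_of_lipschitz {f : ℝ → ℝ} {a b x M : ℝ} (hab : a < b)
    (hf : IntervalIntegrable f volume a b) (hx : x ∈ Icc a b)
    (hL : ∀ u ∈ Icc a b, |f u - f x| ≤ M * |u - x|) :
    |f x - (1 / (b - a)) * ∫ u in a..b, f u|
      ≤ M * ((x - a) ^ 2 + (b - x) ^ 2) / (2 * (b - a)) := by
  have hba : 0 < b - a := sub_pos.2 hab
  have hmean : (1 / (b - a)) * (∫ u in a..b, f u) - f x
      = (1 / (b - a)) * ∫ u in a..b, (f u - f x) := by
    rw [intervalIntegral.integral_sub hf intervalIntegrable_const,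
      intervalIntegral.integral_const, smul_eq_mul]
    field_simp
  have hbound : |∫ u in a..b, (f u - f x)| ≤ M * (((x - a) ^ 2 + (b - x) ^ 2) / 2) := by
    rw [← integral_abs_sub_of_mem_Icc hx, ← intervalIntegral.integral_const_mul]
    exact intervalIntegral.norm_integral_le_of_norm_le (f := fun u => f u - f x)
      (g := fun u => M * |u - x|) hab.le (ae_of_all _ fun u hu => hL u (Ioc_subset_Icc_self hu))
      (((continuous_id.sub continuous_const).abs.intervalIntegrable a b).const_mul M)
  rw [abs_sub_comm, hmean, abs_mul, abs_of_pos (one_div_pos.2 hba)]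
  calc 1 / (b - a) * |∫ u in a..b, (f u - f x)|
      ≤ 1 / (b - a) * (M * (((x - a) ^ 2 + (b - x) ^ 2) / 2)) := by gcongr
    _ = M * ((x - a) ^ 2 + (b - x) ^ 2) / (2 * (b - a)) := by field_simp

theorem ostrowski_s_convex_general
    (s : ℝ) (hs : s ∈ Set.Ioc (0:ℝ) 1)
    (f f' : ℝ → ℝ) (a b M : ℝ) (hab : a < b)
    (hderiv : ∀ y ∈ Set.Icc a b, HasDerivAt f (f' y) y)
    (hM : ∀ y ∈ Set.Icc a b, |f' y| ≤ M)
    (x : ℝ) (hx : x ∈ Set.Icc a b) :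
    |f x - (1 / (b - a)) * ∫ u in a..b, f u| ≤
      (M * ((x - a) ^ 2 + (b - x) ^ 2) / (b - a)) *
        (1 / (2 * s + 1) + Real.Gamma (s + 1) ^ 2 / Real.Gamma (2 * s + 2)) := by
  have hf : ContinuousOn f (Icc a b) := fun y hy =>
    (hderiv y hy).continuousAt.continuousWithinAt
  have hlip : ∀ u ∈ Icc a b, |f u - f x| ≤ M * |u - x| := fun u hu =>
    Convex.norm_image_sub_le_of_norm_hasDerivWithin_le
      (fun y hy => (hderiv y hy).hasDerivWithinAt) hM (convex_Icc a b) hx hu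
  have hM0 : 0 ≤ M := (abs_nonneg _).trans (hM x hx)
  calc |f x - (1 / (b - a)) * ∫ u in a..b, f u|
      ≤ M * ((x - a) ^ 2 + (b - x) ^ 2) / (2 * (b - a)) :=
        abs_sub_average_le_of_lipschitz hab (hf.intervalIntegrable_of_Icc hab.le) hx hlip
    _ = (M * ((x - a) ^ 2 + (b - x) ^ 2) / (b - a)) * (1 / 2) := by
        rw [mul_one_div, div_div, mul_comm 2]
    _ ≤ _ := mul_le_mul_of_nonneg_left (one_half_le_one_div_add_Gamma_sq_div_Gamma hs)
        (div_nonneg (by positivity) (sub_pos.2 hab).le)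

theorem ostrowski_s_convex
    (s : ℝ) (hs : s ∈ Set.Ioc (0:ℝ) 1)
    (f f' : ℝ → ℝ) (a b M : ℝ) (hab : a < b)
    (hderiv : ∀ y ∈ Set.Icc a b, HasDerivAt f (f' y) y)
    (hint : IntervalIntegrable f' volume a b)
    (hconv : ∀ y ∈ Set.Icc a b, ∀ z ∈ Set.Icc a b, ∀ t ∈ Set.Icc (0:ℝ) 1,
      |f' (t * y + (1 - t) * z)| ≤ t ^ s * |f' y| + (1 - t) ^ s * |f' z|)
    (hM : ∀ y ∈ Set.Icc a b, |f' y| ≤ M)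
    (x : ℝ) (hx : x ∈ Set.Icc a b) :
    |f x - (1 / (b - a)) * ∫ u in a..b, f u| ≤
      (M * ((x - a) ^ 2 + (b - x) ^ 2) / (b - a)) *
        (1 / (2 * s + 1) + Real.Gamma (s + 1) ^ 2 / Real.Gamma (2 * s + 2)) :=
  ostrowski_s_convex_general s hs f f' a b M hab hderiv hM x hx
end

section
/- Let h be nonnegative and super-additive (h(x+y) ≥ h(x) + h(y)) with h(t) ≥ t for t ∈ (0,1). Let f be differentiable on the interior of I, f' integrable on [a,b], a < b. If |f'|^q is h-convex on [a,b] for p, q > 1 with 1/p + 1/q = 1, and |f'(x)| ≤ M on [a,b], then for each x ∈ [a,b]: |f(x) - (1/(b-a))∫ₐᵇ f(u) du| ≤ (M·h(1)^{1/q}/(b-a))·(∫₀¹ h(t^p) dt)^{1/p}·((x-a)² + (b-x)²). -/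
open MeasureTheory

theorem ostrowski_h_convex_holder
    (h : ℝ → ℝ) (f f' : ℝ → ℝ) (a b M p q : ℝ) (hab : a < b)
    (hp : 1 < p) (hq : 1 < q) (hpq : 1 / p + 1 / q = 1)
    (hh_nonneg : ∀ t, 0 ≤ t → 0 ≤ h t)
    (hh_superadd : ∀ s t, 0 ≤ s → 0 ≤ t → h s + h t ≤ h (s + t))
    (hh_ge : ∀ t ∈ Set.Ioo (0:ℝ) 1, t ≤ h t)
    (hderiv : ∀ y ∈ Set.Icc a b, HasDerivAt f (f' y) y)
    (hint : IntervalIntegrable f' volume a b)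
    (hconv : ∀ y ∈ Set.Icc a b, ∀ z ∈ Set.Icc a b, ∀ t ∈ Set.Icc (0:ℝ) 1,
      |f' (t * y + (1 - t) * z)| ^ q ≤ h t * |f' y| ^ q + h (1 - t) * |f' z| ^ q)
    (hM : ∀ y ∈ Set.Icc a b, |f' y| ≤ M)
    (x : ℝ) (hx : x ∈ Set.Icc a b) :
    |f x - (1 / (b - a)) * ∫ u in a..b, f u| ≤
      (M * h 1 ^ (1 / q) / (b - a)) * (∫ t in (0:ℝ)..1, h (t ^ p)) ^ (1 / p) *
        ((x - a) ^ 2 + (b - x) ^ 2) := by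
  obtain ⟨hax, hxb⟩ := hx
  have hba : (0:ℝ) < b - a := sub_pos.2 hab
  have hM0 : 0 ≤ M := le_trans (abs_nonneg _) (hM a ⟨le_refl a, hab.le⟩)
  have hp0 : (0:ℝ) < p := by linarith
  -- h 1 ≥ 1
  have hh1 : (1:ℝ) ≤ h 1 := by
    have h1 := hh_superadd (1/2) (1/2) (by norm_num) (by norm_num)
    have h2 := hh_ge (1/2) (by norm_num)
    norm_num at h1
    linarith
  -- h is monotone on [0,∞)
  have hmono : ∀ s t : ℝ, 0 ≤ s → s ≤ t → h s ≤ h t := by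
    intro s t hs hst
    have h1 := hh_superadd s (t - s) hs (by linarith)
    have h2 := hh_nonneg (t - s) (by linarith)
    have : s + (t - s) = t := by ring
    rw [this] at h1
    linarith
  -- t ≤ h t on [0,1]
  have hge' : ∀ s : ℝ, 0 ≤ s → s ≤ 1 → s ≤ h s := by
    intro s hs hs1
    rcases eq_or_lt_of_le hs with rfl | hs
    · exact hh_nonneg 0 le_rfl
    · rcases eq_or_lt_of_le hs1 with rfl | hs1
      · exact hh1
      · exact hh_ge s ⟨hs, hs1⟩
  -- the function t ↦ h (t ^ p) is monotone on [0,1], hence integrable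
  have hmono2 : MonotoneOn (fun t : ℝ => h (t ^ p)) (Set.uIcc (0:ℝ) 1) := by
    rw [Set.uIcc_of_le (by norm_num : (0:ℝ) ≤ 1)]
    intro s hs t ht hst
    exact hmono _ _ (Real.rpow_nonneg hs.1 p) (Real.rpow_le_rpow hs.1 hst hp0.le)
  have hHint : IntervalIntegrable (fun t : ℝ => h (t ^ p)) volume 0 1 :=
    hmono2.intervalIntegrable
  -- lower bound on the integral
  have hI : 1 / (p + 1) ≤ ∫ t in (0:ℝ)..1, h (t ^ p) := by
    have h1 : ∫ t in (0:ℝ)..1, (t : ℝ) ^ p = 1 / (p + 1) := by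
      rw [integral_rpow (Or.inl (by linarith : (-1:ℝ) < p))]
      rw [Real.one_rpow, Real.zero_rpow (by linarith : p + 1 ≠ 0)]
      norm_num
    rw [← h1]
    apply intervalIntegral.integral_mono_on (by norm_num) (intervalIntegral.intervalIntegrable_rpow' (by linarith)) hHint
    intro t ht
    exact hge' _ (Real.rpow_nonneg ht.1 p)
      (Real.rpow_le_one ht.1 ht.2 hp0.le)
  set I := ∫ t in (0:ℝ)..1, h (t ^ p) with hIdef
  have hIpos : 0 < I := lt_of_lt_of_le (by positivity) hI
  -- key constant bound : 1/2 ≤ h 1 ^ (1/q) * I ^ (1/p)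
  have hbern : p + 1 ≤ (2:ℝ) ^ p := by
    have := one_add_mul_self_le_rpow_one_add (by norm_num : (-1:ℝ) ≤ 1) hp.le
    norm_num at this
    linarith
  have hhalf : ((1:ℝ)/2) ^ p ≤ 1 / (p + 1) := by
    rw [Real.div_rpow (by norm_num) (by norm_num), Real.one_rpow]
    apply one_div_le_one_div_of_le (by linarith) hbern
  have hIp : (1:ℝ)/2 ≤ I ^ (1/p) := by
    have h1 : ((1:ℝ)/2) = (((1:ℝ)/2) ^ p) ^ (1/p) := by
      rw [← Real.rpow_mul (by norm_num), mul_one_div, div_self hp0.ne', Real.rpow_one]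
    rw [h1]
    exact Real.rpow_le_rpow (by positivity) (le_trans hhalf hI) (by positivity)
  have hkey : (1:ℝ)/2 ≤ h 1 ^ (1/q) * I ^ (1/p) := by
    have h1 : (1:ℝ) ≤ h 1 ^ (1/q) := Real.one_le_rpow hh1 (by positivity)
    nlinarith [hIp, hIpos.le]
  -- Ostrowski basic inequality
  have hcontf : ContinuousOn f (Set.Icc a b) := fun y hy =>
    (hderiv y hy).continuousAt.continuousWithinAt
  have hfint : IntervalIntegrable f volume a b :=
    hcontf.intervalIntegrable_of_Icc hab.le
  have hlip : ∀ u ∈ Set.Icc a b, |f x - f u| ≤ M * |x - u| := by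
    intro u hu
    have := Convex.norm_image_sub_le_of_norm_hasDerivWithin_le
      (f := f) (f' := f') (s := Set.Icc a b) (C := M)
      (fun y hy => (hderiv y hy).hasDerivWithinAt)
      (fun y hy => by simpa [Real.norm_eq_abs] using hM y hy)
      (convex_Icc a b) hu ⟨hax, hxb⟩
    simpa [Real.norm_eq_abs] using this
  have hrepr : f x - (1/(b-a)) * ∫ u in a..b, f u
      = (1/(b-a)) * ∫ u in a..b, (f x - f u) := by
    rw [intervalIntegral.integral_sub intervalIntegrable_const hfint,
      intervalIntegral.integral_const]
    field_simp
    ring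
  have hcontabs : ContinuousOn (fun u => |f x - f u|) (Set.Icc a b) :=
    ((continuousOn_const.sub hcontf).abs)
  have habsint : IntervalIntegrable (fun u => |f x - f u|) volume a b :=
    hcontabs.intervalIntegrable_of_Icc hab.le
  have hbint : IntervalIntegrable (fun u => M * |x - u|) volume a b :=
    ((continuous_const.mul ((continuous_const.sub continuous_id).abs)).intervalIntegrable a b)
  have habs : |∫ u in a..b, (f x - f u)| ≤ ∫ u in a..b, M * |x - u| :=
    le_trans (intervalIntegral.abs_integral_le_integral_abs hab.le)
      (intervalIntegral.integral_mono_on hab.le habsint hbint hlip)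
  -- compute ∫ |x - u|
  have hxint1 : IntervalIntegrable (fun u => |x - u|) volume a x :=
    ((continuous_const.sub continuous_id).abs).intervalIntegrable a x
  have hxint2 : IntervalIntegrable (fun u => |x - u|) volume x b :=
    ((continuous_const.sub continuous_id).abs).intervalIntegrable x b
  have hc1 : ∫ u in a..x, |x - u| = (x - a)^2 / 2 := by
    have he : Set.EqOn (fun u => |x - u|) (fun u => x - u) (Set.uIcc a x) := by
      intro u hu
      rw [Set.uIcc_of_le hax] at hu
      simp only
      rw [abs_of_nonneg (by linarith [hu.2])]
    rw [intervalIntegral.integral_congr he,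
      intervalIntegral.integral_sub intervalIntegrable_const
        (intervalIntegral.intervalIntegrable_id),
      intervalIntegral.integral_const, integral_id]
    simp only [smul_eq_mul]
    ring
  have hc2 : ∫ u in x..b, |x - u| = (b - x)^2 / 2 := by
    have he : Set.EqOn (fun u => |x - u|) (fun u => u - x) (Set.uIcc x b) := by
      intro u hu
      rw [Set.uIcc_of_le hxb] at hu
      simp only
      rw [abs_sub_comm, abs_of_nonneg (by linarith [hu.1])]
    rw [intervalIntegral.integral_congr he,
      intervalIntegral.integral_sub (intervalIntegral.intervalIntegrable_id)
        intervalIntegrable_const,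
      intervalIntegral.integral_const, integral_id]
    simp only [smul_eq_mul]
    ring
  have hcomp : ∫ u in a..b, M * |x - u| = M * ((x - a)^2/2 + (b - x)^2/2) := by
    rw [intervalIntegral.integral_const_mul, ← intervalIntegral.integral_add_adjacent_intervals hxint1 hxint2,
      hc1, hc2]
  -- combine
  have hmain : |f x - (1/(b-a)) * ∫ u in a..b, f u|
      ≤ (M / (b-a)) * ((x - a)^2/2 + (b - x)^2/2) := by
    rw [hrepr, abs_mul, abs_of_nonneg (by positivity : (0:ℝ) ≤ 1/(b-a))]
    calc 1/(b-a) * |∫ u in a..b, (f x - f u)|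
        ≤ 1/(b-a) * (M * ((x - a)^2/2 + (b - x)^2/2)) := by
          apply mul_le_mul_of_nonneg_left _ (by positivity)
          rw [← hcomp]; exact habs
      _ = (M / (b-a)) * ((x - a)^2/2 + (b - x)^2/2) := by ring
  refine le_trans hmain ?_
  have hS : (0:ℝ) ≤ (x - a)^2 + (b - x)^2 := by positivity
  have : (M / (b-a)) * ((x - a)^2/2 + (b - x)^2/2)
      = (M / (b-a) * ((x - a)^2 + (b - x)^2)) * (1/2) := by ring
  rw [this]
  have h2 : (M / (b-a) * ((x - a)^2 + (b - x)^2)) * (1/2)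
      ≤ (M / (b-a) * ((x - a)^2 + (b - x)^2)) * (h 1 ^ (1/q) * I ^ (1/p)) :=
    mul_le_mul_of_nonneg_left hkey (by positivity)
  refine le_trans h2 (le_of_eq ?_)
  ring
end

section
/- Let h be nonnegative with h(1/2) > 0, and let g be nonnegative, integrable and h-concave on [a,b] with a < b. Then (1/(b-a))∫ₐᵇ g(x) dx ≤ (1/(2h(1/2)))·g((a+b)/2). (The left half of the Hermite–Hadamard inequality for h-concave functions, reversed.) -/
open MeasureTheory

theorem hermite_hadamard_h_concave
    (h : ℝ → ℝ) (g : ℝ → ℝ) (a b : ℝ) (hab : a < b)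
    (hh_nonneg : ∀ t ∈ Set.Icc (0:ℝ) 1, 0 ≤ h t)
    (hh_half : 0 < h (1 / 2))
    (hg_nonneg : ∀ y ∈ Set.Icc a b, 0 ≤ g y)
    (hg_int : IntervalIntegrable g volume a b)
    (hconc : ∀ y ∈ Set.Icc a b, ∀ z ∈ Set.Icc a b, ∀ t ∈ Set.Icc (0:ℝ) 1,
      h t * g y + h (1 - t) * g z ≤ g (t * y + (1 - t) * z)) :
    (1 / (b - a)) * ∫ u in a..b, g u ≤ (1 / (2 * h (1 / 2))) * g ((a + b) / 2) := by
  have hrefl : IntervalIntegrable (fun x => g (a + b - x)) volume a b := by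
    have := hg_int.comp_sub_left (a + b)
    simpa using this.symm
  have key : ∀ x ∈ Set.Icc a b,
      h (1/2) * g x + h (1/2) * g (a + b - x) ≤ g ((a + b) / 2) := by
    intro x hx
    have hx' : a + b - x ∈ Set.Icc a b :=
      ⟨by linarith [hx.2], by linarith [hx.1]⟩
    have := hconc x hx (a + b - x) hx' (1/2) (by norm_num)
    have e : (1:ℝ) - 1/2 = 1/2 := by norm_num
    rw [e] at this
    have e2 : (1/2:ℝ) * x + (1/2) * (a + b - x) = (a + b) / 2 := by ring
    rwa [e2] at this
  have hint : ∫ x in a..b, (h (1/2) * g x + h (1/2) * g (a + b - x)) ≤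
      ∫ x in a..b, g ((a + b) / 2) := by
    apply intervalIntegral.integral_mono_on hab.le
      ((hg_int.const_mul _).add (hrefl.const_mul _)) intervalIntegrable_const
    exact key
  have hsub : ∫ x in a..b, g (a + b - x) = ∫ x in a..b, g x := by
    have := intervalIntegral.integral_comp_sub_left g (a + b) (a := a) (b := b)
    simpa using this
  rw [intervalIntegral.integral_add (hg_int.const_mul _) (hrefl.const_mul _),
    intervalIntegral.integral_const_mul, intervalIntegral.integral_const_mul, hsub,
    intervalIntegral.integral_const] at hint
  have hba : (0:ℝ) < b - a := by linarith
  rw [one_div, one_div, inv_mul_eq_div, inv_mul_eq_div,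
    div_le_div_iff₀ hba (by positivity)]
  simp only [smul_eq_mul] at hint
  nlinarith [hint]
end

section
/- Let h be nonnegative with h not identically 0, f ∈ SX(h,I) (h-convex), a, b ∈ I with a < b, f integrable on [a,b], and h integrable on [0,1]. Then (1/(2h(1/2)))·f((a+b)/2) ≤ (1/(b-a))∫ₐᵇ f(x) dx ≤ (f(a) + f(b))·∫₀¹ h(t) dt. -/
open MeasureTheory

/-!
Both bounds come from integrating an `h`-convexity inequality over `t ∈ [0, 1]`: the substitution
`u = t a + (1 - t) b` turns `∫₀¹ f (t a + (1 - t) b) dt` into the mean value of `f` on `[a, b]`.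
For the left bound, `h`-convexity at `t = 1/2` is applied to the pair `t a + (1 - t) b`,
`t b + (1 - t) a`, whose midpoint is `(a + b) / 2` for every `t`; for the right bound it is
applied to the endpoints, and `∫₀¹ h (1 - t) dt = ∫₀¹ h t dt`.
-/

def HConvexOn (h : ℝ → ℝ) (s : Set ℝ) (f : ℝ → ℝ) : Prop :=
  ∀ x ∈ s, ∀ y ∈ s, ∀ t ∈ Set.Icc (0 : ℝ) 1,
    f (t * x + (1 - t) * y) ≤ h t * f x + h (1 - t) * f y

section Reparametrization

variable {E : Type*} [NormedAddCommGroup E] {f : ℝ → E} {a b : ℝ}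

theorem IntervalIntegrable.comp_combo_zero_one (hf : IntervalIntegrable f volume a b) :
    IntervalIntegrable (fun t => f (t * a + (1 - t) * b)) volume 0 1 := by
  rcases eq_or_ne a b with rfl | hab
  · simp only [← add_mul, add_sub_cancel, one_mul]
    exact intervalIntegrable_const
  have hab' : a - b ≠ 0 := sub_ne_zero.2 hab
  have := (hf.comp_add_right b).comp_mul_left (c := a - b)
  rw [sub_self, zero_div, div_self hab'] at this
  convert this.symm using 3 with t
  ring

theorem intervalIntegral.integral_zero_one_comp_combo [NormedSpace ℝ E] (hab : a ≠ b) :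
    ∫ t in (0 : ℝ)..1, f (t * a + (1 - t) * b) = ⨍ u in a..b, f u := by
  have hab' : a - b ≠ 0 := sub_ne_zero.2 hab
  have hcombo : ∀ t : ℝ, t * a + (1 - t) * b = (a - b) * t + b := fun t => by ring
  simp_rw [hcombo, integral_comp_mul_add _ hab', interval_average_symm _ a, interval_average_eq]
  simp

end Reparametrization

theorem combo_mem_Icc {a b x y t : ℝ} (hx : x ∈ Set.Icc a b) (hy : y ∈ Set.Icc a b)
    (ht : t ∈ Set.Icc (0 : ℝ) 1) : t * x + (1 - t) * y ∈ Set.Icc a b :=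
  convex_Icc a b hx hy ht.1 (sub_nonneg.2 ht.2) (add_sub_cancel t 1)

namespace HConvexOn

variable {h f : ℝ → ℝ} {s : Set ℝ} {a b : ℝ}

theorem map_midpoint_le (hf : HConvexOn h s f) {x y : ℝ} (hx : x ∈ s) (hy : y ∈ s) :
    f ((x + y) / 2) ≤ h (1 / 2) * (f x + f y) := by
  convert hf x hx y hy (1 / 2) ⟨by norm_num, by norm_num⟩ using 2 <;> ring_nf

theorem map_midpoint_le_intervalAverage (hf : HConvexOn h (Set.Icc a b) f) (hab : a < b)
    (hf_int : IntervalIntegrable f volume a b) :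
    f ((a + b) / 2) ≤ 2 * h (1 / 2) * ⨍ u in a..b, f u := by
  have hmid : ∀ t ∈ Set.Icc (0 : ℝ) 1,
      f ((a + b) / 2) ≤ h (1 / 2) * (f (t * a + (1 - t) * b) + f (t * b + (1 - t) * a)) := by
    intro t ht
    have ha := Set.left_mem_Icc.2 hab.le
    have hb := Set.right_mem_Icc.2 hab.le
    convert hf.map_midpoint_le (combo_mem_Icc ha hb ht) (combo_mem_Icc hb ha ht) using 2
    ring
  have hint := intervalIntegral.integral_mono_on zero_le_one intervalIntegrable_const
    ((hf_int.comp_combo_zero_one.add hf_int.symm.comp_combo_zero_one).const_mul _) hmid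
  rw [intervalIntegral.integral_const, sub_zero, one_smul,
    intervalIntegral.integral_const_mul, intervalIntegral.integral_add
    hf_int.comp_combo_zero_one hf_int.symm.comp_combo_zero_one,
    intervalIntegral.integral_zero_one_comp_combo hab.ne,
    intervalIntegral.integral_zero_one_comp_combo hab.ne', interval_average_symm _ b a] at hint
  linarith

theorem intervalAverage_le (hf : HConvexOn h (Set.Icc a b) f) (hab : a < b)
    (hf_int : IntervalIntegrable f volume a b) (hh_int : IntervalIntegrable h volume 0 1) :
    ⨍ u in a..b, f u ≤ (f a + f b) * ∫ t in (0 : ℝ)..1, h t := by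
  have hh_int' : IntervalIntegrable (fun t => h (1 - t)) volume 0 1 := by
    simpa using (hh_int.comp_sub_left 1).symm
  have hh_symm : ∫ t in (0 : ℝ)..1, h (1 - t) = ∫ t in (0 : ℝ)..1, h t := by
    simp
  have hend : ∀ t ∈ Set.Icc (0 : ℝ) 1,
      f (t * a + (1 - t) * b) ≤ h t * f a + h (1 - t) * f b :=
    hf a (Set.left_mem_Icc.2 hab.le) b (Set.right_mem_Icc.2 hab.le)
  have hint := intervalIntegral.integral_mono_on zero_le_one hf_int.comp_combo_zero_one
    ((hh_int.mul_const _).add (hh_int'.mul_const _)) hend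
  rw [intervalIntegral.integral_zero_one_comp_combo hab.ne,
    intervalIntegral.integral_add (hh_int.mul_const _) (hh_int'.mul_const _),
    intervalIntegral.integral_mul_const, intervalIntegral.integral_mul_const, hh_symm] at hint
  linarith

end HConvexOn

theorem hermite_hadamard_h_convex_general
    (h : ℝ → ℝ) (f : ℝ → ℝ) (a b : ℝ) (hab : a < b)
    (hh_half : 0 < h (1 / 2))
    (hf_int : IntervalIntegrable f volume a b)
    (hh_int : IntervalIntegrable h volume 0 1)
    (hconv : ∀ y ∈ Set.Icc a b, ∀ z ∈ Set.Icc a b, ∀ t ∈ Set.Icc (0:ℝ) 1,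
      f (t * y + (1 - t) * z) ≤ h t * f y + h (1 - t) * f z) :
    (1 / (2 * h (1 / 2))) * f ((a + b) / 2) ≤ (1 / (b - a)) * ∫ u in a..b, f u ∧
      (1 / (b - a)) * ∫ u in a..b, f u ≤ (f a + f b) * ∫ t in (0:ℝ)..1, h t := by
  have hf : HConvexOn h (Set.Icc a b) f := hconv
  rw [one_div (b - a), ← smul_eq_mul (b - a)⁻¹, ← interval_average_eq]
  refine ⟨?_, hf.intervalAverage_le hab hf_int hh_int⟩
  rw [one_div_mul_eq_div, div_le_iff₀' (by positivity)]
  exact hf.map_midpoint_le_intervalAverage hab hf_int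

theorem hermite_hadamard_h_convex
    (h : ℝ → ℝ) (f : ℝ → ℝ) (a b : ℝ) (hab : a < b)
    (hh_nonneg : ∀ t ∈ Set.Icc (0:ℝ) 1, 0 ≤ h t)
    (hh_half : 0 < h (1 / 2))
    (hf_nonneg : ∀ y ∈ Set.Icc a b, 0 ≤ f y)
    (hf_int : IntervalIntegrable f volume a b)
    (hh_int : IntervalIntegrable h volume 0 1)
    (hconv : ∀ y ∈ Set.Icc a b, ∀ z ∈ Set.Icc a b, ∀ t ∈ Set.Icc (0:ℝ) 1,
      f (t * y + (1 - t) * z) ≤ h t * f y + h (1 - t) * f z) :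
    (1 / (2 * h (1 / 2))) * f ((a + b) / 2) ≤ (1 / (b - a)) * ∫ u in a..b, f u ∧
      (1 / (b - a)) * ∫ u in a..b, f u ≤ (f a + f b) * ∫ t in (0:ℝ)..1, h t :=
  hermite_hadamard_h_convex_general h f a b hab hh_half hf_int hh_int hconv
end

section
/- Let h be nonnegative, super-additive, with h(t) ≥ t on (0,1) and h(1/2) > 0. Let f be differentiable on the interior of I with f' integrable on [a,b], a < b. If |f'|^q is h-concave on [a,b] for p, q > 1 with 1/p+1/q = 1, then for each x ∈ [a,b]: |f(x) - (1/(b-a))∫ₐᵇ f(u) du| ≤ (1/(2^{1/q}·(p+1)^{1/p}·h(1/2)^{1/q}))·[((x-a)²/(b-a))·|f'((x+a)/2)| + ((b-x)²/(b-a))·|f'((x+b)/2)|]. -/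
/-!
Integrating by parts on `[a, x]` and `[x, b]` (Montgomery's identity) writes
`(b - a) (f x - mean f)` as `∫_a^x (u - a) f' u du + ∫_x^b (u - b) f' u du`. On each piece
`[α, β]`, h-concavity of `|f'|^q` at `t = 1/2` applied to `u` and its reflection `α + β - u` gives
`h(1/2) (|f' u|^q + |f' (α + β - u)|^q) ≤ |f' ((α + β) / 2)|^q`; integrating, the two terms have the
same integral, so `∫ |f'|^q ≤ (β - α) |f'((α + β) / 2)|^q / (2 h(1/2))`. Hölder's inequality with
`∫_α^β |u - c|^p du = (β - α)^(p + 1) / (p + 1)` for an endpoint `c` bounds each piece.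
-/

open MeasureTheory Set

def IsHConcaveOn (h : ℝ → ℝ) (s : Set ℝ) (φ : ℝ → ℝ) : Prop :=
  ∀ y ∈ s, ∀ z ∈ s, ∀ t ∈ Icc (0 : ℝ) 1, h t * φ y + h (1 - t) * φ z ≤ φ (t * y + (1 - t) * z)

theorem IsHConcaveOn.mul_add_mul_reflect_le {h φ : ℝ → ℝ} {s : Set ℝ} (hφ : IsHConcaveOn h s φ)
    {α β u : ℝ} (hs : Icc α β ⊆ s) (hu : u ∈ Icc α β) :
    h (1 / 2) * φ u + h (1 / 2) * φ (α + β - u) ≤ φ ((α + β) / 2) := by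
  have := hφ u (hs hu) (α + β - u) (hs ⟨by linarith [hu.2], by linarith [hu.1]⟩) (1 / 2)
    ⟨by norm_num, by norm_num⟩
  rwa [show (1 : ℝ) - 1 / 2 = 1 / 2 by norm_num,
    show 1 / 2 * u + 1 / 2 * (α + β - u) = (α + β) / 2 by ring] at this

theorem integral_sub_mul_deriv_eq {f f' : ℝ → ℝ} {a b c : ℝ}
    (hf : ∀ y ∈ uIcc a b, HasDerivAt f (f' y) y) (hf' : IntervalIntegrable f' volume a b) :
    ∫ u in a..b, (u - c) * f' u = (b - c) * f b - (a - c) * f a - ∫ u in a..b, f u := by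
  simpa using intervalIntegral.integral_mul_deriv_eq_deriv_mul
    (fun y _ => (hasDerivAt_id y).sub_const c) hf intervalIntegrable_const hf'

theorem montgomery_identity {f f' : ℝ → ℝ} {a b x : ℝ} (hx : x ∈ Icc a b)
    (hf : ∀ y ∈ Icc a b, HasDerivAt f (f' y) y) (hf' : IntervalIntegrable f' volume a b) :
    (b - a) * f x - ∫ u in a..b, f u =
      (∫ u in a..x, (u - a) * f' u) + ∫ u in x..b, (u - b) * f' u := by
  rw [← uIcc_of_le (hx.1.trans hx.2)] at hf hx
  have hfi : IntervalIntegrable f volume a b :=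
    ContinuousOn.intervalIntegrable fun y hy => (hf y hy).continuousAt.continuousWithinAt
  have hax := uIcc_subset_uIcc_left hx
  have hxb := uIcc_subset_uIcc_right hx
  rw [integral_sub_mul_deriv_eq (fun y hy => hf y (hax hy)) (hf'.mono_set hax),
    integral_sub_mul_deriv_eq (fun y hy => hf y (hxb hy)) (hf'.mono_set hxb),
    ← intervalIntegral.integral_add_adjacent_intervals (hfi.mono_set hax) (hfi.mono_set hxb)]
  ring

section

variable {α β : ℝ}

theorem memLp_restrict_Ioc_of_abs_le {g : ℝ → ℝ} {C : ℝ} (hg : IntervalIntegrable g volume α β)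
    (hC : ∀ u ∈ Icc α β, |g u| ≤ C) (r : ENNReal) : MemLp g r (volume.restrict (Ioc α β)) := by
  have : IsFiniteMeasure (volume.restrict (Ioc α β)) := by
    rw [isFiniteMeasure_restrict]; exact measure_Ioc_lt_top.ne
  refine MemLp.of_bound hg.1.aestronglyMeasurable C ?_
  exact (ae_restrict_iff' measurableSet_Ioc).2
    (.of_forall fun u hu => hC u (Ioc_subset_Icc_self hu))

theorem abs_intervalIntegral_mul_le_Lp_mul_Lq {p q : ℝ} (hpq : p.HolderConjugate q) (hαβ : α ≤ β)
    {f g : ℝ → ℝ} (hf : MemLp f (ENNReal.ofReal p) (volume.restrict (Ioc α β)))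
    (hg : MemLp g (ENNReal.ofReal q) (volume.restrict (Ioc α β))) :
    |∫ u in α..β, f u * g u| ≤
      (∫ u in α..β, |f u| ^ p) ^ (1 / p) * (∫ u in α..β, |g u| ^ q) ^ (1 / q) := by
  simp only [intervalIntegral.integral_of_le hαβ]
  have holder := integral_mul_norm_le_Lp_mul_Lq hpq hf hg
  simp only [Real.norm_eq_abs] at holder
  exact (abs_integral_le_integral_abs.trans_eq (by simp only [abs_mul])).trans holder

theorem integral_abs_sub_rpow_of_endpoint {p c : ℝ} (hp : -1 < p) (hαβ : α ≤ β)
    (hc : c = α ∨ c = β) :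
    ∫ u in α..β, |u - c| ^ p = (β - α) ^ (p + 1) / (p + 1) := by
  have hshift : ∫ u in α..β, |u - c| ^ p = ∫ u in (0 : ℝ)..(β - α), |u| ^ p := by
    rcases hc with rfl | rfl
    · simpa using intervalIntegral.integral_comp_sub_right (a := c) (b := β) (fun u => |u| ^ p) c
    · simpa [abs_sub_comm] using
        intervalIntegral.integral_comp_sub_left (a := α) (b := c) (fun u => |u| ^ p) c
  rw [hshift, intervalIntegral.integral_congr (g := fun u => u ^ p), integral_rpow (.inl hp),
    Real.zero_rpow (by linarith), sub_zero]
  intro u hu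
  rw [uIcc_of_le (sub_nonneg.2 hαβ)] at hu
  simp only [abs_of_nonneg hu.1]

theorem integral_rpow_abs_le_of_midpoint {g : ℝ → ℝ} {K q : ℝ} (hK : 0 < K) (hαβ : α ≤ β)
    (hg : IntervalIntegrable (fun u => |g u| ^ q) volume α β)
    (hmid : ∀ u ∈ Icc α β, K * |g u| ^ q + K * |g (α + β - u)| ^ q ≤ |g ((α + β) / 2)| ^ q) :
    ∫ u in α..β, |g u| ^ q ≤ (β - α) * |g ((α + β) / 2)| ^ q / (2 * K) := by
  have hreflect : ∫ u in α..β, |g (α + β - u)| ^ q = ∫ u in α..β, |g u| ^ q := by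
    simpa using
      intervalIntegral.integral_comp_sub_left (a := α) (b := β) (fun u => |g u| ^ q) (α + β)
  have hg' : IntervalIntegrable (fun u => |g (α + β - u)| ^ q) volume α β := by
    simpa using (hg.comp_sub_left (α + β)).symm
  have hsum := intervalIntegral.integral_mono_on hαβ ((hg.const_mul K).add (hg'.const_mul K))
    intervalIntegrable_const hmid
  rw [intervalIntegral.integral_add (hg.const_mul K) (hg'.const_mul K),
    intervalIntegral.integral_const_mul, intervalIntegral.integral_const_mul, hreflect,
    intervalIntegral.integral_const, smul_eq_mul] at hsum
  rw [le_div_iff₀ (by positivity)]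
  linarith

theorem abs_integral_sub_endpoint_mul_le_of_midpoint {g : ℝ → ℝ} {K p q c : ℝ}
    (hpq : p.HolderConjugate q) (hK : 0 < K) (hαβ : α ≤ β) (hc : c = α ∨ c = β)
    (hg : IntervalIntegrable g volume α β)
    (hmid : ∀ u ∈ Icc α β, K * |g u| ^ q + K * |g (α + β - u)| ^ q ≤ |g ((α + β) / 2)| ^ q) :
    |∫ u in α..β, (u - c) * g u| ≤
      (β - α) ^ 2 / ((p + 1) ^ (1 / p) * (2 * K) ^ (1 / q)) * |g ((α + β) / 2)| := by
  set M := |g ((α + β) / 2)|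
  have hp := hpq.left_pos
  have hq := hpq.right_pos
  have hd : 0 ≤ β - α := sub_nonneg.2 hαβ
  -- the midpoint bound makes `g` bounded, hence in every `Lᵖ` on the interval
  have hbdd : ∀ u ∈ Icc α β, |g u| ≤ (M ^ q / K) ^ q⁻¹ := by
    intro u hu
    rw [Real.le_rpow_inv_iff_of_pos (abs_nonneg _) (by positivity) hq, le_div_iff₀ hK]
    have : 0 ≤ K * |g (α + β - u)| ^ q := by positivity
    linarith [hmid u hu]
  have hgLq : MemLp g (ENNReal.ofReal q) (volume.restrict (Ioc α β)) :=
    memLp_restrict_Ioc_of_abs_le hg hbdd _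
  have hwLp : MemLp (fun u => u - c) (ENNReal.ofReal p) (volume.restrict (Ioc α β)) := by
    refine memLp_restrict_Ioc_of_abs_le (C := β - α)
      ((continuous_sub_right c).intervalIntegrable α β) (fun u hu => ?_) _
    rcases hc with rfl | rfl <;> rw [abs_le] <;> constructor <;> linarith [hu.1, hu.2]
  have hgq : IntervalIntegrable (fun u => |g u| ^ q) volume α β := by
    rw [intervalIntegrable_iff_integrableOn_Ioc_of_le hαβ]
    have := hgLq.integrable_norm_rpow (by simpa using hq) ENNReal.ofReal_ne_top
    simp only [Real.norm_eq_abs, ENNReal.toReal_ofReal hq.le] at this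
    exact this
  have hsq : (β - α) ^ ((p + 1) * (1 / p)) * (β - α) ^ (1 / q) = (β - α) ^ 2 := by
    have hexp : (p + 1) * (1 / p) + 1 / q = 2 := by
      have := hpq.inv_add_inv_eq_inv
      field_simp at this ⊢
      linarith
    rw [← Real.rpow_add' hd (by rw [hexp]; norm_num), hexp, Real.rpow_two]
  calc |∫ u in α..β, (u - c) * g u|
      ≤ (∫ u in α..β, |u - c| ^ p) ^ (1 / p) * (∫ u in α..β, |g u| ^ q) ^ (1 / q) :=
        abs_intervalIntegral_mul_le_Lp_mul_Lq hpq hαβ hwLp hgLq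
    _ ≤ ((β - α) ^ (p + 1) / (p + 1)) ^ (1 / p) * ((β - α) * M ^ q / (2 * K)) ^ (1 / q) := by
        rw [integral_abs_sub_rpow_of_endpoint (by linarith) hαβ hc]
        have hLq_nonneg : 0 ≤ ∫ u in α..β, |g u| ^ q :=
          intervalIntegral.integral_nonneg hαβ fun u _ => by positivity
        gcongr
        exact integral_rpow_abs_le_of_midpoint hK hαβ hgq hmid
    _ = (β - α) ^ 2 / ((p + 1) ^ (1 / p) * (2 * K) ^ (1 / q)) * M := by
        rw [Real.div_rpow (by positivity) (by positivity),
          Real.div_rpow (by positivity) (by positivity), Real.mul_rpow hd (by positivity),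
          ← Real.rpow_mul hd, ← Real.rpow_mul (abs_nonneg _), mul_one_div_cancel hq.ne',
          Real.rpow_one, ← hsq]
        ring

end

theorem ostrowski_h_concave_general
    (h : ℝ → ℝ) (f f' : ℝ → ℝ) (a b p q : ℝ) (hab : a < b)
    (hp : 1 < p) (hq : 1 < q) (hpq : 1 / p + 1 / q = 1)
    (hh_half : 0 < h (1 / 2))
    (hderiv : ∀ y ∈ Set.Icc a b, HasDerivAt f (f' y) y)
    (hint : IntervalIntegrable f' volume a b)
    (hconc : ∀ y ∈ Set.Icc a b, ∀ z ∈ Set.Icc a b, ∀ t ∈ Set.Icc (0:ℝ) 1,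
      h t * |f' y| ^ q + h (1 - t) * |f' z| ^ q ≤ |f' (t * y + (1 - t) * z)| ^ q)
    (x : ℝ) (hx : x ∈ Set.Icc a b) :
    |f x - (1 / (b - a)) * ∫ u in a..b, f u| ≤
      (1 / ((2:ℝ) ^ (1 / q) * (p + 1) ^ (1 / p) * h (1 / 2) ^ (1 / q))) *
        (((x - a) ^ 2 / (b - a)) * |f' ((x + a) / 2)| +
         ((b - x) ^ 2 / (b - a)) * |f' ((x + b) / 2)|) := by
  have hpq' : p.HolderConjugate q :=
    ⟨by simpa only [one_div, inv_one] using hpq, by linarith, by linarith⟩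
  have hconc' : IsHConcaveOn h (Icc a b) (fun y => |f' y| ^ q) := hconc
  have hx' : x ∈ uIcc a b := uIcc_of_le hab.le ▸ hx
  have hleft := abs_integral_sub_endpoint_mul_le_of_midpoint hpq' hh_half hx.1 (Or.inl rfl)
    (hint.mono_set (uIcc_subset_uIcc_left hx'))
    fun u hu => hconc'.mul_add_mul_reflect_le (Icc_subset_Icc_right hx.2) hu
  have hright := abs_integral_sub_endpoint_mul_le_of_midpoint hpq' hh_half hx.2 (Or.inr rfl)
    (hint.mono_set (uIcc_subset_uIcc_right hx'))
    fun u hu => hconc'.mul_add_mul_reflect_le (Icc_subset_Icc_left hx.1) hu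
  have hba : 0 < b - a := sub_pos.2 hab
  rw [show f x - 1 / (b - a) * ∫ u in a..b, f u = ((b - a) * f x - ∫ u in a..b, f u) / (b - a) by
      field_simp, montgomery_identity hx hderiv hint, abs_div, abs_of_pos hba, div_le_iff₀ hba,
    add_comm x a]
  calc _ ≤ _ := abs_add_le _ _
    _ ≤ _ := add_le_add hleft hright
    _ = _ := by
      rw [Real.mul_rpow zero_le_two hh_half.le]
      field_simp

theorem ostrowski_h_concave
    (h : ℝ → ℝ) (f f' : ℝ → ℝ) (a b p q : ℝ) (hab : a < b)
    (hp : 1 < p) (hq : 1 < q) (hpq : 1 / p + 1 / q = 1)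
    (hh_nonneg : ∀ t, 0 ≤ t → 0 ≤ h t)
    (hh_superadd : ∀ s t, 0 ≤ s → 0 ≤ t → h s + h t ≤ h (s + t))
    (hh_ge : ∀ t ∈ Set.Ioo (0:ℝ) 1, t ≤ h t)
    (hh_half : 0 < h (1 / 2))
    (hderiv : ∀ y ∈ Set.Icc a b, HasDerivAt f (f' y) y)
    (hint : IntervalIntegrable f' volume a b)
    (hconc : ∀ y ∈ Set.Icc a b, ∀ z ∈ Set.Icc a b, ∀ t ∈ Set.Icc (0:ℝ) 1,
      h t * |f' y| ^ q + h (1 - t) * |f' z| ^ q ≤ |f' (t * y + (1 - t) * z)| ^ q)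
    (x : ℝ) (hx : x ∈ Set.Icc a b) :
    |f x - (1 / (b - a)) * ∫ u in a..b, f u| ≤
      (1 / ((2:ℝ) ^ (1 / q) * (p + 1) ^ (1 / p) * h (1 / 2) ^ (1 / q))) *
        (((x - a) ^ 2 / (b - a)) * |f' ((x + a) / 2)| +
         ((b - x) ^ 2 / (b - a)) * |f' ((x + b) / 2)|) :=
  ostrowski_h_concave_general h f f' a b p q hab hp hq hpq hh_half hderiv hint hconc x hx
end

section
/- Let f be differentiable on an open interval containing [a,b] with f' integrable, and suppose |f'|^q is concave on [a,b] for p, q > 1 with 1/p+1/q = 1. Then |f((a+b)/2) - (1/(b-a))∫ₐᵇ f(u) du| ≤ ((b-a)/(4(p+1)^{1/p}))·[|f'((3a+b)/4)| + |f'((a+3b)/4)|]. -/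
/-!
With `m = (a + b) / 2`, integrating by parts against the Peano kernel (`u - a` on `[a, m]`,
`u - b` on `[m, b]`) gives `(b - a) f(m) - ∫ₐᵇ f = ∫ₐᵐ (u - a) f' + ∫ₘᵇ (u - b) f'`.
On each half, Hölder's inequality bounds the weighted integral by `‖u - z‖_p ‖f'‖_q`, and the
Hermite–Hadamard inequality for the concave function `|f'| ^ q` bounds `∫ |f'| ^ q` by the length
of the half times `|f'| ^ q` at its midpoint.
-/

open MeasureTheory Set

namespace ConcaveOn

variable {g : ℝ → ℝ} {s : Set ℝ} {a b : ℝ}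

lemma add_le_two_mul_midpoint (hg : ConcaveOn ℝ s g) {u v : ℝ} (hu : u ∈ s) (hv : v ∈ s) :
    g u + g v ≤ 2 * g ((u + v) / 2) := by
  have h := hg.2 hu hv (by norm_num : (0 : ℝ) ≤ 1 / 2) (by norm_num : (0 : ℝ) ≤ 1 / 2)
    (by norm_num)
  simp only [smul_eq_mul] at h
  rw [show 1 / 2 * u + 1 / 2 * v = (u + v) / 2 by ring] at h
  linarith

lemma le_two_mul_midpoint_sub_min (hg : ConcaveOn ℝ (Icc a b) g) {u : ℝ} (hu : u ∈ Icc a b) :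
    g u ≤ 2 * g ((a + b) / 2) - min (g a) (g b) := by
  have hu' : a + b - u ∈ Icc a b := ⟨by linarith [hu.2], by linarith [hu.1]⟩
  have hab : a ≤ b := hu.1.trans hu.2
  have hmid := hg.add_le_two_mul_midpoint hu hu'
  have hmin := hg.min_le_of_mem_Icc (left_mem_Icc.2 hab) (right_mem_Icc.2 hab) hu'
  rw [show (u + (a + b - u)) / 2 = (a + b) / 2 by ring] at hmid
  linarith

lemma aestronglyMeasurable_restrict_Ioc (hg : ConcaveOn ℝ (Icc a b) g) :
    AEStronglyMeasurable g (volume.restrict (Ioc a b)) := by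
  rw [← restrict_Ioo_eq_restrict_Ioc, ← interior_Icc]
  exact hg.continuousOn_interior.aestronglyMeasurable isOpen_interior.measurableSet

lemma intervalIntegrable (hg : ConcaveOn ℝ (Icc a b) g) (hab : a ≤ b) :
    IntervalIntegrable g volume a b := by
  rw [intervalIntegrable_iff_integrableOn_Ioc_of_le hab]
  set lo := min (g a) (g b)
  set hi := 2 * g ((a + b) / 2) - lo
  refine Integrable.of_bound hg.aestronglyMeasurable_restrict_Ioc (|lo| + |hi|) ?_
  filter_upwards [ae_restrict_mem measurableSet_Ioc] with u hu
  have hu : u ∈ Icc a b := Ioc_subset_Icc_self hu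
  have hlo := hg.min_le_of_mem_Icc (left_mem_Icc.2 hab) (right_mem_Icc.2 hab) hu
  have hhi := hg.le_two_mul_midpoint_sub_min hu
  rw [Real.norm_eq_abs, abs_le]
  constructor <;> linarith [neg_abs_le lo, le_abs_self hi, abs_nonneg lo, abs_nonneg hi]

lemma integral_le_mul_midpoint (hg : ConcaveOn ℝ (Icc a b) g) (hab : a ≤ b) :
    ∫ u in a..b, g u ≤ (b - a) * g ((a + b) / 2) := by
  have hint := hg.intervalIntegrable hab
  have hrefl : IntervalIntegrable (fun u => g (a + b - u)) volume a b := by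
    simpa using (hint.comp_sub_left (a + b)).symm
  have hsum : ∫ u in a..b, (g u + g (a + b - u)) ≤ ∫ _ in a..b, 2 * g ((a + b) / 2) := by
    refine intervalIntegral.integral_mono_on hab (hint.add hrefl) intervalIntegrable_const
      fun u hu => ?_
    have hu' : a + b - u ∈ Icc a b := ⟨by linarith [hu.2], by linarith [hu.1]⟩
    simpa only [add_sub_cancel] using hg.add_le_two_mul_midpoint hu hu'
  rw [intervalIntegral.integral_add hint hrefl, intervalIntegral.integral_comp_sub_left g,
    intervalIntegral.integral_const, smul_eq_mul] at hsum
  simp only [add_sub_cancel_right, add_sub_cancel_left] at hsum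
  linarith

lemma integral_mul_abs_le {h w : ℝ → ℝ} {p q : ℝ} (hpq : p.HolderConjugate q) (hab : a ≤ b)
    (hconc : ConcaveOn ℝ (Icc a b) fun u => |h u| ^ q) (hw : Continuous w)
    (hw0 : ∀ u ∈ Icc a b, 0 ≤ w u) :
    ∫ u in a..b, w u * |h u| ≤
      (∫ u in a..b, w u ^ p) ^ (1 / p) * ((b - a) ^ (1 / q) * |h ((a + b) / 2)|) := by
  have hq0 : 0 < q := hpq.symm.pos
  have habs_eq : ∀ u, (|h u| ^ q) ^ (1 / q) = |h u| := fun u => by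
    rw [← Real.rpow_mul (abs_nonneg _), mul_one_div_cancel hq0.ne', Real.rpow_one]
  have : IsFiniteMeasure (volume.restrict (Ioc a b)) :=
    isFiniteMeasure_restrict.2 measure_Ioc_lt_top.ne
  have hg_int : Integrable (fun u => |h u| ^ q) (volume.restrict (Ioc a b)) :=
    (hconc.intervalIntegrable hab).1
  -- `h` itself need not be measurable; `|h| = (|h| ^ q) ^ (1 / q)` is, by concavity of `|h| ^ q`.
  have habs_meas : AEStronglyMeasurable (fun u => |h u|) (volume.restrict (Ioc a b)) := by
    simpa only [habs_eq] using (Real.continuous_rpow_const (by positivity : (0 : ℝ) ≤ 1 / q))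
      |>.comp_aestronglyMeasurable hg_int.1
  have hh_mem : MemLp (fun u => |h u|) (ENNReal.ofReal q) (volume.restrict (Ioc a b)) := by
    refine (integrable_norm_rpow_iff habs_meas (by simpa using hq0) ENNReal.ofReal_ne_top).1 ?_
    simpa [ENNReal.toReal_ofReal hq0.le] using hg_int
  obtain ⟨C, hC⟩ := isCompact_Icc.exists_bound_of_continuousOn (hw.continuousOn (s := Icc a b))
  have hw_mem : MemLp w (ENNReal.ofReal p) (volume.restrict (Ioc a b)) := by
    refine MemLp.of_bound hw.aestronglyMeasurable.restrict C ?_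
    filter_upwards [ae_restrict_mem measurableSet_Ioc] with u hu
    exact hC u (Ioc_subset_Icc_self hu)
  have hw_nonneg : 0 ≤ᵐ[volume.restrict (Ioc a b)] w := by
    filter_upwards [ae_restrict_mem measurableSet_Ioc] with u hu
    exact hw0 u (Ioc_subset_Icc_self hu)
  have hholder := integral_mul_le_Lp_mul_Lq_of_nonneg hpq hw_nonneg
    (Filter.Eventually.of_forall fun u => abs_nonneg (h u)) hw_mem hh_mem
  simp only [← intervalIntegral.integral_of_le hab] at hholder
  refine hholder.trans (mul_le_mul_of_nonneg_left ?_ (Real.rpow_nonneg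
    (intervalIntegral.integral_nonneg hab fun u hu => Real.rpow_nonneg (hw0 u hu) p) _))
  calc (∫ u in a..b, |h u| ^ q) ^ (1 / q)
      ≤ ((b - a) * |h ((a + b) / 2)| ^ q) ^ (1 / q) :=
        Real.rpow_le_rpow (intervalIntegral.integral_nonneg hab fun _ _ => by positivity)
          (hconc.integral_le_mul_midpoint hab) (by positivity)
    _ = (b - a) ^ (1 / q) * |h ((a + b) / 2)| := by
        rw [Real.mul_rpow (by linarith) (by positivity), habs_eq]

end ConcaveOn

lemma integral_abs_sub_rpow_of_endpoint_s13 {a b z p : ℝ} (hp : -1 < p) (hab : a ≤ b)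
    (hz : z = a ∨ z = b) :
    ∫ u in a..b, |u - z| ^ p = (b - a) ^ (p + 1) / (p + 1) := by
  have hzero : ∫ t in (0 : ℝ)..(b - a), |t| ^ p = (b - a) ^ (p + 1) / (p + 1) := by
    rw [intervalIntegral.integral_congr (g := fun t => t ^ p) fun t ht => by
      rw [uIcc_of_le (by linarith)] at ht; simp only [abs_of_nonneg ht.1],
      integral_rpow (Or.inl hp), Real.zero_rpow (by linarith), sub_zero]
  rcases hz with rfl | rfl
  · rw [intervalIntegral.integral_comp_sub_right (fun t => |t| ^ p), sub_self, hzero]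
  · simp_rw [abs_sub_comm _ z]
    rw [intervalIntegral.integral_comp_sub_left (fun t => |t| ^ p), sub_self, hzero]

lemma rpow_add_one_div_rpow_mul_rpow {p q L : ℝ} (hpq : p.HolderConjugate q) (hL : 0 ≤ L) :
    (L ^ (p + 1) / (p + 1)) ^ (1 / p) * L ^ (1 / q) = L ^ 2 / (p + 1) ^ (1 / p) := by
  have hp0 : 0 < p := hpq.pos
  have hexp : (p + 1) * (1 / p) + 1 / q = 2 := by
    rw [add_mul, mul_one_div_cancel hp0.ne', one_mul, add_assoc, hpq.one_div_add_one_div]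
    norm_num
  rw [Real.div_rpow (by positivity) (by linarith), ← Real.rpow_mul hL, div_mul_eq_mul_div,
    ← Real.rpow_add' hL (by rw [hexp]; norm_num), hexp]
  norm_cast

lemma ConcaveOn.abs_integral_sub_mul_le {h : ℝ → ℝ} {a b z p q : ℝ}
    (hpq : p.HolderConjugate q) (hab : a ≤ b) (hz : z = a ∨ z = b)
    (hconc : ConcaveOn ℝ (Icc a b) fun u => |h u| ^ q) :
    |∫ u in a..b, (u - z) * h u| ≤ (b - a) ^ 2 / (p + 1) ^ (1 / p) * |h ((a + b) / 2)| := by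
  calc |∫ u in a..b, (u - z) * h u|
      ≤ ∫ u in a..b, |u - z| * |h u| := by
        simpa only [abs_mul] using intervalIntegral.abs_integral_le_integral_abs
          (f := fun u => (u - z) * h u) hab
    _ ≤ (∫ u in a..b, |u - z| ^ p) ^ (1 / p) * ((b - a) ^ (1 / q) * |h ((a + b) / 2)|) :=
        hconc.integral_mul_abs_le hpq hab (continuous_abs.comp (continuous_sub_right z))
          fun _ _ => abs_nonneg _
    _ = (b - a) ^ 2 / (p + 1) ^ (1 / p) * |h ((a + b) / 2)| := by
        rw [integral_abs_sub_rpow_of_endpoint_s13 (by linarith [hpq.pos]) hab hz, ← mul_assoc,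
          rpow_add_one_div_rpow_mul_rpow hpq (by linarith)]

lemma integral_sub_mul_deriv {f f' : ℝ → ℝ} {a b : ℝ} (c : ℝ)
    (hf : ∀ u ∈ uIcc a b, HasDerivAt f (f' u) u) (hf' : IntervalIntegrable f' volume a b) :
    ∫ u in a..b, (u - c) * f' u = (b - c) * f b - (a - c) * f a - ∫ u in a..b, f u := by
  simpa using intervalIntegral.integral_mul_deriv_eq_deriv_mul
    (fun u _ => (hasDerivAt_id u).sub_const c) hf intervalIntegrable_const hf'

lemma mul_sub_integral_eq_integral_kernel {f f' : ℝ → ℝ} {a m b : ℝ} (ham : a ≤ m) (hmb : m ≤ b)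
    (hf : ∀ u ∈ Icc a b, HasDerivAt f (f' u) u) (hf' : IntervalIntegrable f' volume a b) :
    (b - a) * f m - ∫ u in a..b, f u =
      (∫ u in a..m, (u - a) * f' u) + ∫ u in m..b, (u - b) * f' u := by
  rw [← uIcc_of_le (ham.trans hmb)] at hf
  have hm : m ∈ uIcc a b := by rw [uIcc_of_le (ham.trans hmb)]; exact ⟨ham, hmb⟩
  have hsub_left : uIcc a m ⊆ uIcc a b := uIcc_subset_uIcc left_mem_uIcc hm
  have hsub_right : uIcc m b ⊆ uIcc a b := uIcc_subset_uIcc hm right_mem_uIcc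
  have hfi : IntervalIntegrable f volume a b :=
    (HasDerivAt.continuousOn hf).intervalIntegrable
  rw [integral_sub_mul_deriv a (fun u hu => hf u (hsub_left hu)) (hf'.mono_set hsub_left),
    integral_sub_mul_deriv b (fun u hu => hf u (hsub_right hu)) (hf'.mono_set hsub_right),
    ← intervalIntegral.integral_add_adjacent_intervals (hfi.mono_set hsub_left)
      (hfi.mono_set hsub_right)]
  ring

theorem ostrowski_concave_midpoint_general
    (f f' : ℝ → ℝ) (a b p q : ℝ) (hab : a < b)
    (hp : 1 < p) (hpq : 1 / p + 1 / q = 1)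
    (hderiv : ∀ y ∈ Set.Icc a b, HasDerivAt f (f' y) y)
    (hint : IntervalIntegrable f' volume a b)
    (hconc : ConcaveOn ℝ (Set.Icc a b) (fun y => |f' y| ^ q)) :
    |f ((a + b) / 2) - (1 / (b - a)) * ∫ u in a..b, f u| ≤
      ((b - a) / (4 * (p + 1) ^ (1 / p))) *
        (|f' ((3 * a + b) / 4)| + |f' ((a + 3 * b) / 4)|) := by
  have hpq' : p.HolderConjugate q :=
    Real.holderConjugate_iff.2 ⟨hp, by simpa only [one_div] using hpq⟩
  have hba : 0 < b - a := by linarith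
  have ham : a ≤ (a + b) / 2 := by linarith
  have hmb : (a + b) / 2 ≤ b := by linarith
  have hleft : |∫ u in a..(a + b) / 2, (u - a) * f' u| ≤
      ((b - a) / 2) ^ 2 / (p + 1) ^ (1 / p) * |f' ((3 * a + b) / 4)| := by
    have h := (hconc.subset (Icc_subset_Icc_right hmb) (convex_Icc _ _)).abs_integral_sub_mul_le
      hpq' ham (Or.inl rfl)
    rwa [show (a + (a + b) / 2) / 2 = (3 * a + b) / 4 by ring,
      show (a + b) / 2 - a = (b - a) / 2 by ring] at h
  have hright : |∫ u in (a + b) / 2..b, (u - b) * f' u| ≤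
      ((b - a) / 2) ^ 2 / (p + 1) ^ (1 / p) * |f' ((a + 3 * b) / 4)| := by
    have h := (hconc.subset (Icc_subset_Icc_left ham) (convex_Icc _ _)).abs_integral_sub_mul_le
      hpq' hmb (Or.inr rfl)
    rwa [show ((a + b) / 2 + b) / 2 = (a + 3 * b) / 4 by ring,
      show b - (a + b) / 2 = (b - a) / 2 by ring] at h
  rw [← mul_div_cancel_left₀ (f ((a + b) / 2)) hba.ne', one_div_mul_eq_div, ← sub_div,
    mul_sub_integral_eq_integral_kernel ham hmb hderiv hint, abs_div, abs_of_pos hba,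
    div_le_iff₀ hba]
  calc _ ≤ _ := abs_add_le _ _
    _ ≤ _ := add_le_add hleft hright
    _ = _ := by field_simp; ring

theorem ostrowski_concave_midpoint
    (f f' : ℝ → ℝ) (a b p q : ℝ) (hab : a < b)
    (hp : 1 < p) (hq : 1 < q) (hpq : 1 / p + 1 / q = 1)
    (hderiv : ∀ y ∈ Set.Icc a b, HasDerivAt f (f' y) y)
    (hint : IntervalIntegrable f' volume a b)
    (hconc : ConcaveOn ℝ (Set.Icc a b) (fun y => |f' y| ^ q)) :
    |f ((a + b) / 2) - (1 / (b - a)) * ∫ u in a..b, f u| ≤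
      ((b - a) / (4 * (p + 1) ^ (1 / p))) *
        (|f' ((3 * a + b) / 4)| + |f' ((a + 3 * b) / 4)|) :=
  ostrowski_concave_midpoint_general f f' a b p q hab hp hpq hderiv hint hconc
end

section
/- Let 0 < a < b and p, q > 1 with 1/p+1/q = 1. Then |ln((a+b)/2 + 1) - (1/(b-a))∫ₐᵇ ln(u+1) du| ≤ ((b-a)/(4(p+1)^{1/p}))·[1/((3a+b)/4 + 1) + 1/((a+3b)/4 + 1)], i.e. the right side equals ((b-a)/(4(p+1)^{1/p}))·[4/(3a+b+4) + 4/(a+3b+4)] up to the stated normalization. -/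
open MeasureTheory Real Set

/-!
With `c = a + 1`, `d = b + 1` the left side is `E(c, d) / (d - c)`, where `E(c, d)` is the error
of the midpoint rule for `log` on `[c, d]`. Fix `c` and vary `d`: `E(c, c) = 0`, and
`∂E/∂d = log ((c + d) / 2) - log d + (d - c) / (c + d)` lies between `0` and
`(d - c)² / (2d(c + d))` by `1 - 1/y ≤ log y ≤ y - 1` for `y = (c + d) / (2d)`. That upper
bound is in turn dominated by the `d`-derivative of `(d - c)²/2 · (1/(3c + d) + 1/(c + 3d))`,
which gives the inequality with the constant `(p + 1)^(1/p)` replaced by `2`; Bernoulli's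
inequality shows `(p + 1)^(1/p) ≤ 2`.
-/

theorem le_of_hasDerivAt_le {f g f' g' : ℝ → ℝ} {c d : ℝ} (hcd : c ≤ d)
    (hf : ∀ x ∈ Icc c d, HasDerivAt f (f' x) x) (hg : ∀ x ∈ Icc c d, HasDerivAt g (g' x) x)
    (hle : ∀ x ∈ Ico c d, f' x ≤ g' x) (hc : f c ≤ g c) : f d ≤ g d :=
  image_le_of_deriv_right_le_deriv_boundary
    (fun x hx => (hf x hx).continuousAt.continuousWithinAt)
    (fun x hx => (hf x (Ico_subset_Icc_self hx)).hasDerivWithinAt) hc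
    (fun x hx => (hg x hx).continuousAt.continuousWithinAt)
    (fun x hx => (hg x (Ico_subset_Icc_self hx)).hasDerivWithinAt) hle ⟨hcd, le_rfl⟩

noncomputable def logMidpointError (c d : ℝ) : ℝ :=
  (d - c) * log ((c + d) / 2) - ∫ u in c..d, log u

theorem logMidpointError_self (c : ℝ) : logMidpointError c c = 0 := by
  simp [logMidpointError]

theorem hasDerivAt_logMidpointError {c x : ℝ} (hx : 0 < x) (hcx : 0 < c + x) :
    HasDerivAt (logMidpointError c) (log ((c + x) / 2) - log x + (x - c) / (c + x)) x := by
  have hmid : HasDerivAt (fun y => (y - c) * log ((c + y) / 2))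
      (1 * log ((c + x) / 2) + (x - c) * ((1 / 2) / ((c + x) / 2))) x :=
    ((hasDerivAt_id x).sub_const c).mul
      ((((hasDerivAt_id x).const_add c).div_const 2).log (by positivity))
  have hint : HasDerivAt (fun y => y * log y - c * log c - y + c) (log x + 1 - 1) x :=
    (((hasDerivAt_mul_log hx.ne').sub_const _).sub (hasDerivAt_id x)).add_const c
  have hclosed : logMidpointError c = fun y => (y - c) * log ((c + y) / 2)
      - (y * log y - c * log c - y + c) := by
    ext y
    simp only [logMidpointError, integral_log]
  rw [hclosed]
  refine (hmid.fun_sub hint).congr_deriv ?_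
  field_simp
  ring

theorem logMidpointError_deriv_bounds {c x : ℝ} (hx : 0 < x) (hcx : 0 < c + x) :
    0 ≤ log ((c + x) / 2) - log x + (x - c) / (c + x) ∧
      log ((c + x) / 2) - log x + (x - c) / (c + x) ≤ (x - c) ^ 2 / (2 * x * (c + x)) := by
  have hy : 0 < (c + x) / (2 * x) := by positivity
  have hlog : log ((c + x) / 2) - log x = log ((c + x) / (2 * x)) := by
    rw [← log_div (by positivity) hx.ne']
    ring_nf
  rw [hlog]
  constructor
  · have := one_sub_inv_le_log_of_pos hy
    have h : 1 - ((c + x) / (2 * x))⁻¹ = -((x - c) / (c + x)) := by field_simp; ring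
    linarith
  · have := log_le_sub_one_of_pos hy
    have h : (c + x) / (2 * x) - 1 + (x - c) / (c + x) = (x - c) ^ 2 / (2 * x * (c + x)) := by
      field_simp; ring
    linarith

theorem hasDerivAt_midpointBound {c x : ℝ} (h1 : 0 < 3 * c + x) (h2 : 0 < c + 3 * x) :
    HasDerivAt (fun y => (y - c) ^ 2 / 2 * (1 / (3 * c + y) + 1 / (c + 3 * y)))
      ((x - c) * (1 / (3 * c + x) + 1 / (c + 3 * x))
        - (x - c) ^ 2 / 2 * (1 / (3 * c + x) ^ 2 + 3 / (c + 3 * x) ^ 2)) x := by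
  have hsq : HasDerivAt (fun y => (y - c) ^ 2 / 2) (↑2 * (x - c) ^ (2 - 1) * 1 / 2) x :=
    (((hasDerivAt_id x).sub_const c).pow 2).div_const 2
  have hinv1 : HasDerivAt (fun y => 1 / (3 * c + y))
      ((0 * (3 * c + x) - 1 * 1) / (3 * c + x) ^ 2) x :=
    (hasDerivAt_const x 1).div ((hasDerivAt_id x).const_add (3 * c)) h1.ne'
  have hinv2 : HasDerivAt (fun y => 1 / (c + 3 * y))
      ((0 * (c + 3 * x) - 1 * (3 * 1)) / (c + 3 * x) ^ 2) x :=
    (hasDerivAt_const x 1).div (((hasDerivAt_id x).const_mul 3).const_add c) h2.ne'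
  refine (hsq.fun_mul (hinv1.fun_add hinv2)).congr_deriv ?_
  ring

theorem midpointBound_deriv_ge {c x : ℝ} (hc : 0 < c) (hcx : c ≤ x) :
    (x - c) ^ 2 / (2 * x * (c + x)) ≤
      (x - c) * (1 / (3 * c + x) + 1 / (c + 3 * x))
        - (x - c) ^ 2 / 2 * (1 / (3 * c + x) ^ 2 + 3 / (c + 3 * x) ^ 2) := by
  have hx : 0 < x := hc.trans_le hcx
  have hdiff : (x - c) * (1 / (3 * c + x) + 1 / (c + 3 * x))
        - (x - c) ^ 2 / 2 * (1 / (3 * c + x) ^ 2 + 3 / (c + 3 * x) ^ 2)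
        - (x - c) ^ 2 / (2 * x * (c + x))
      = (x - c) * (3 * x ^ 5 + 53 * c * x ^ 4 + 134 * c ^ 2 * x ^ 3 + 210 * c ^ 3 * x ^ 2
          + 103 * c ^ 4 * x + 9 * c ^ 5)
        / (2 * x * (c + x) * (3 * c + x) ^ 2 * (c + 3 * x) ^ 2) := by
    field_simp
    ring
  have hnonneg : 0 ≤ (x - c) * (3 * x ^ 5 + 53 * c * x ^ 4 + 134 * c ^ 2 * x ^ 3
      + 210 * c ^ 3 * x ^ 2 + 103 * c ^ 4 * x + 9 * c ^ 5)
      / (2 * x * (c + x) * (3 * c + x) ^ 2 * (c + 3 * x) ^ 2) :=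
    div_nonneg (mul_nonneg (sub_nonneg.mpr hcx) (by positivity)) (by positivity)
  linarith

theorem logMidpointError_nonneg {c d : ℝ} (hc : 0 < c) (hcd : c ≤ d) :
    0 ≤ logMidpointError c d := by
  exact le_of_hasDerivAt_le (f := fun _ => 0) hcd (fun x _ => hasDerivAt_const x 0)
    (fun x hx => hasDerivAt_logMidpointError (hc.trans_le hx.1) (by linarith [hx.1]))
    (fun x hx => (logMidpointError_deriv_bounds (hc.trans_le hx.1) (by linarith [hx.1])).1)
    (logMidpointError_self c).ge

theorem logMidpointError_le {c d : ℝ} (hc : 0 < c) (hcd : c ≤ d) :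
    logMidpointError c d ≤ (d - c) ^ 2 / 2 * (1 / (3 * c + d) + 1 / (c + 3 * d)) := by
  refine le_of_hasDerivAt_le
    (g := fun y => (y - c) ^ 2 / 2 * (1 / (3 * c + y) + 1 / (c + 3 * y))) hcd
    (fun x hx => hasDerivAt_logMidpointError (hc.trans_le hx.1) (by linarith [hx.1]))
    (fun x hx => hasDerivAt_midpointBound (by linarith [hx.1]) (by linarith [hx.1]))
    (fun x hx => ((logMidpointError_deriv_bounds (hc.trans_le hx.1) (by linarith [hx.1])).2).trans
      (midpointBound_deriv_ge hc hx.1)) ?_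
  simp [logMidpointError_self]

theorem rpow_one_div_le_two {p : ℝ} (hp : 1 ≤ p) : (p + 1) ^ (1 / p) ≤ 2 := by
  have hbern : p + 1 ≤ 2 ^ p := by
    simpa [add_comm, one_add_one_eq_two] using
      one_add_mul_self_le_rpow_one_add (s := 1) (by norm_num) hp
  calc (p + 1) ^ (1 / p) ≤ ((2 : ℝ) ^ p) ^ (1 / p) := by gcongr
    _ = 2 := by rw [← rpow_mul zero_le_two, mul_one_div_cancel (by positivity), rpow_one]

theorem log_mean_inequality_general
    (a b p : ℝ) (ha : 0 < a) (hab : a < b)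
    (hp : 1 < p) :
    |Real.log ((a + b) / 2 + 1) - (1 / (b - a)) * ∫ u in a..b, Real.log (u + 1)| ≤
      ((b - a) / (4 * (p + 1) ^ (1 / p))) *
        (1 / ((3 * a + b) / 4 + 1) + 1 / ((a + 3 * b) / 4 + 1)) := by
  have hb : 0 < b := ha.trans hab
  have hba : 0 < b - a := sub_pos.mpr hab
  have hcd : a + 1 ≤ b + 1 := by linarith
  have hgap : Real.log ((a + b) / 2 + 1) - (1 / (b - a)) * ∫ u in a..b, Real.log (u + 1)
      = logMidpointError (a + 1) (b + 1) / (b - a) := by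
    rw [logMidpointError, intervalIntegral.integral_comp_add_right (fun u => log u),
      show b + 1 - (a + 1) = b - a by ring, show (a + 1 + (b + 1)) / 2 = (a + b) / 2 + 1 by ring]
    field_simp
  have hbound : (b + 1 - (a + 1)) ^ 2 / 2
        * (1 / (3 * (a + 1) + (b + 1)) + 1 / (a + 1 + 3 * (b + 1)))
      = (b - a) * ((b - a) / 8 * (1 / ((3 * a + b) / 4 + 1) + 1 / ((a + 3 * b) / 4 + 1))) := by
    field_simp
    ring
  have hK : (b - a) / 8 ≤ (b - a) / (4 * (p + 1) ^ (1 / p)) := by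
    have := rpow_one_div_le_two hp.le
    gcongr
    linarith
  rw [hgap, abs_of_nonneg (div_nonneg (logMidpointError_nonneg (by positivity) hcd) hba.le),
    div_le_iff₀' hba]
  calc logMidpointError (a + 1) (b + 1)
      ≤ (b - a) * ((b - a) / 8 * (1 / ((3 * a + b) / 4 + 1) + 1 / ((a + 3 * b) / 4 + 1))) :=
        hbound ▸ logMidpointError_le (by positivity) hcd
    _ ≤ _ := by gcongr

theorem log_mean_inequality
    (a b p q : ℝ) (ha : 0 < a) (hab : a < b)
    (hp : 1 < p) (hq : 1 < q) (hpq : 1 / p + 1 / q = 1) :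
    |Real.log ((a + b) / 2 + 1) - (1 / (b - a)) * ∫ u in a..b, Real.log (u + 1)| ≤
      ((b - a) / (4 * (p + 1) ^ (1 / p))) *
        (1 / ((3 * a + b) / 4 + 1) + 1 / ((a + 3 * b) / 4 + 1)) :=
  log_mean_inequality_general a b p ha hab hp
end
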